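/- arXiv:1905.01668 — 2 statements merged into one kernel-verified Lean document; each statement's English description precedes it below -/
import Mathlib

section
/- Let R be a ring and let M be a nonzero R-module equipped with two finite filtrations 0 = A₀ ⊆ A₁ ⊆ ... ⊆ A_r = M and 0 = B₀ ⊆ B₁ ⊆ ... ⊆ B_s = M (with A₁ ≠ 0 and B₁ ≠ 0). Then there exists a nonzero R-module τ and indices i, j such that τ embeds into A_{i+1}/A_i and τ embeds into B_{j+1}/B_j. -/
/-!
Let `N := B 1`, a nonzero submodule. Since `A 0 = ⊥` is disjoint from `N` and `A r = ⊤` is not,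
there is a step `i < r` with `A i` disjoint from `N` but `A (i + 1)` not. Then
`τ := A (i + 1) ⊓ N` is nonzero, meets `A i` trivially, hence embeds into `A (i + 1) / A i`,
and it embeds into `N = B 1 / B 0`.
-/

theorem Nat.exists_lt_and_not_succ_of_not {p : ℕ → Prop} {n : ℕ} (h0 : p 0) (hn : ¬ p n) :
    ∃ i < n, p i ∧ ¬ p (i + 1) := by
  induction n with
  | zero => exact absurd h0 hn
  | succ n ih =>
    by_cases hpn : p n
    · exact ⟨n, n.lt_succ_self, hpn, hn⟩
    · obtain ⟨i, hin, hpi, hpi'⟩ := ih hpn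
      exact ⟨i, hin.trans n.lt_succ_self, hpi, hpi'⟩

namespace Submodule

variable {R M : Type*} [Ring R] [AddCommGroup M] [Module R M]

theorem injective_mkQ_comp_inclusion {S P Q : Submodule R M} (hSP : S ≤ P) (hSQ : Disjoint S Q) :
    Function.Injective ((Q.comap P.subtype).mkQ ∘ₗ inclusion hSP) := by
  rwa [← LinearMap.ker_eq_bot, LinearMap.ker_comp, ker_mkQ, ← comap_comp,
    subtype_comp_inclusion, ← disjoint_iff_comap_eq_bot]

end Submodule

theorem common_submodule_of_two_filtrations_general
    {R : Type} [Ring R] {M : Type} [AddCommGroup M] [Module R M]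
    (r s : ℕ) (A B : ℕ → Submodule R M)
    (hA0 : A 0 = ⊥) (hAr : A r = ⊤)
    (hB0 : B 0 = ⊥) (hBs : B s = ⊤) (hB1 : B 1 ≠ ⊥) :
    ∃ (τ : Type) (_ : AddCommGroup τ) (_ : Module R τ), Nontrivial τ ∧
      ∃ i < r, ∃ j < s,
        (∃ f : τ →ₗ[R] (↥(A (i + 1)) ⧸ Submodule.comap (A (i + 1)).subtype (A i)),
            Function.Injective f) ∧
        (∃ g : τ →ₗ[R] (↥(B (j + 1)) ⧸ Submodule.comap (B (j + 1)).subtype (B j)),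
            Function.Injective g) := by
  obtain ⟨i, hir, hdisj, hmeet⟩ :=
    Nat.exists_lt_and_not_succ_of_not (p := fun k => Disjoint (A k) (B 1))
      (by rw [hA0]; exact disjoint_bot_left) (by rwa [hAr, top_disjoint])
  have hs : s ≠ 0 := by
    rintro rfl
    exact hB1 (eq_bot_iff.2 (hB0 ▸ hBs ▸ le_top))
  have hτ : Nontrivial ↥(A (i + 1) ⊓ B 1) :=
    Submodule.nontrivial_iff_ne_bot.2 (disjoint_iff.not.1 hmeet)
  have hτA := Submodule.injective_mkQ_comp_inclusion (S := A (i + 1) ⊓ B 1) (Q := A i)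
    inf_le_left (hdisj.symm.mono_left inf_le_right)
  have hτB := Submodule.injective_mkQ_comp_inclusion (S := A (i + 1) ⊓ B 1) (Q := B 0)
    inf_le_right (hB0 ▸ disjoint_bot_right)
  exact ⟨_, inferInstance, inferInstance, hτ, i, hir, 0, Nat.pos_of_ne_zero hs,
    ⟨_, hτA⟩, ⟨_, hτB⟩⟩

/-- Given two finite filtrations of a nonzero module `M`, there is a nonzero module `τ`
embedding into a layer of each filtration. -/
theorem common_submodule_of_two_filtrations
    {R : Type} [Ring R] {M : Type} [AddCommGroup M] [Module R M]
    (hM : Nontrivial M)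
    (r s : ℕ) (A B : ℕ → Submodule R M)
    (hAmono : Monotone A) (hBmono : Monotone B)
    (hA0 : A 0 = ⊥) (hAr : A r = ⊤) (hA1 : A 1 ≠ ⊥)
    (hB0 : B 0 = ⊥) (hBs : B s = ⊤) (hB1 : B 1 ≠ ⊥) :
    ∃ (τ : Type) (_ : AddCommGroup τ) (_ : Module R τ), Nontrivial τ ∧
      ∃ i < r, ∃ j < s,
        (∃ f : τ →ₗ[R] (↥(A (i + 1)) ⧸ Submodule.comap (A (i + 1)).subtype (A i)),
            Function.Injective f) ∧
        (∃ g : τ →ₗ[R] (↥(B (j + 1)) ⧸ Submodule.comap (B (j + 1)).subtype (B j)),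
            Function.Injective g) :=
  common_submodule_of_two_filtrations_general r s A B hA0 hAr hB0 hBs hB1
end

section
/- Define a union-intersection operation on a multiset m of nonempty finite integer intervals: choose two linked intervals Δ, Δ' in m and replace them by Δ ∪ Δ' and Δ ∩ Δ' (omitting Δ ∩ Δ' if it is empty). For a positive integer l let N(m, l) be the number of intervals in m of length l. If m' is obtained from m by a nonempty finite chain of union-intersection operations, then there exists a positive integer l such that N(m', l) > N(m, l) and N(m', l') ≥ N(m, l') for all l' > l. -/
/-- A nonempty finite integer interval. -/
def IsIntegerInterval (s : Finset ℤ) : Prop := ∃ a b : ℤ, a ≤ b ∧ s = Finset.Icc a b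

/-- Two intervals are linked if neither contains the other and their union is an interval. -/
def AreLinked (Δ Δ' : Finset ℤ) : Prop :=
  ¬ Δ ⊆ Δ' ∧ ¬ Δ' ⊆ Δ ∧ IsIntegerInterval (Δ ∪ Δ')

/-- One union-intersection operation: replace two linked intervals `Δ, Δ'` in the
multiset by `Δ ∪ Δ'` and `Δ ∩ Δ'` (dropping the intersection if it is empty). -/
def UIStep (m m' : Multiset (Finset ℤ)) : Prop :=
  ∃ (Δ Δ' : Finset ℤ) (rest : Multiset (Finset ℤ)),
    AreLinked Δ Δ' ∧ m = Δ ::ₘ Δ' ::ₘ rest ∧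
      m' = (Δ ∪ Δ') ::ₘ (if Δ ∩ Δ' = ∅ then rest else (Δ ∩ Δ') ::ₘ rest)

/-- `N m l` is the number of intervals in `m` of length `l`, with multiplicity. -/
def numOfLength (m : Multiset (Finset ℤ)) (l : ℕ) : ℕ :=
  Multiset.card (m.filter (fun s => s.card = l))

def GoodRel (m m' : Multiset (Finset ℤ)) : Prop :=
  ∃ l : ℕ, 0 < l ∧ numOfLength m l < numOfLength m' l ∧
    ∀ l' > l, numOfLength m l' ≤ numOfLength m' l'

lemma numOfLength_cons (a : Finset ℤ) (s : Multiset (Finset ℤ)) (k : ℕ) :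
    numOfLength (a ::ₘ s) k = (if a.card = k then 1 else 0) + numOfLength s k := by
  simp only [numOfLength, Multiset.filter_cons, Multiset.card_add]
  split <;> simp

lemma good_of_step {m m' : Multiset (Finset ℤ)} (h : UIStep m m') : GoodRel m m' := by
  obtain ⟨Δ, Δ', rest, ⟨h1, h2, _⟩, hm, hm'⟩ := h
  obtain ⟨x, hxΔ, hxΔ'⟩ := Finset.not_subset.mp h1
  obtain ⟨y, hyΔ', hyΔ⟩ := Finset.not_subset.mp h2
  have hΔlt : Δ.card < (Δ ∪ Δ').card :=
    Finset.card_lt_card ⟨Finset.subset_union_left, fun hs => hyΔ (hs (Finset.mem_union_right _ hyΔ'))⟩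
  have hΔ'lt : Δ'.card < (Δ ∪ Δ').card :=
    Finset.card_lt_card ⟨Finset.subset_union_right, fun hs => hxΔ' (hs (Finset.mem_union_left _ hxΔ))⟩
  have hIlt : (Δ ∩ Δ').card < (Δ ∪ Δ').card :=
    lt_of_le_of_lt (Finset.card_le_card Finset.inter_subset_left) hΔlt
  set l := (Δ ∪ Δ').card with hl
  refine ⟨l, ?_, ?_, ?_⟩
  · exact Finset.card_pos.mpr ⟨x, Finset.mem_union_left _ hxΔ⟩
  · subst hm hm'
    split
    · rw [numOfLength_cons, numOfLength_cons, numOfLength_cons]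
      split_ifs <;> omega
    · rw [numOfLength_cons, numOfLength_cons, numOfLength_cons, numOfLength_cons]
      split_ifs <;> omega
  · intro l' hl'
    subst hm hm'
    split
    · rw [numOfLength_cons, numOfLength_cons, numOfLength_cons]
      split_ifs <;> omega
    · rw [numOfLength_cons, numOfLength_cons, numOfLength_cons, numOfLength_cons]
      split_ifs <;> omega

lemma good_trans {a b c : Multiset (Finset ℤ)} (h1 : GoodRel a b) (h2 : GoodRel b c) :
    GoodRel a c := by
  obtain ⟨l1, hl1, hs1, hg1⟩ := h1
  obtain ⟨l2, hl2, hs2, hg2⟩ := h2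
  rcases lt_trichotomy l1 l2 with h | h | h
  · exact ⟨l2, hl2, lt_of_le_of_lt (hg1 l2 h) hs2,
      fun l' hl' => le_trans (hg1 l' (h.trans hl')) (hg2 l' hl')⟩
  · subst h
    exact ⟨l1, hl1, lt_trans hs1 hs2, fun l' hl' => le_trans (hg1 l' hl') (hg2 l' hl')⟩
  · exact ⟨l1, hl1, lt_of_lt_of_le hs1 (hg2 l1 h),
      fun l' hl' => le_trans (hg1 l' hl') (hg2 l' (h.trans hl'))⟩

/-- After a nonempty chain of union-intersection operations, there is a length `l` whose
count strictly increases, while counts of all larger lengths do not decrease. -/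
theorem exists_length_increase_of_ui_chain
    (m m' : Multiset (Finset ℤ))
    (hm : ∀ s ∈ m, IsIntegerInterval s)
    (h : Relation.TransGen UIStep m m') :
    ∃ l : ℕ, 0 < l ∧ numOfLength m l < numOfLength m' l ∧
      ∀ l' > l, numOfLength m l' ≤ numOfLength m' l' := by
  induction h with
  | single h => exact good_of_step h
  | tail _ h ih => exact good_trans ih (good_of_step h)
end
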